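/- Let m ≥ 1 be an integer and let z be a complex number with Re z ∈ (-m, 0) such that z is not a negative integer. Then ∫₀^∞ s^{z-1} (e^{-s} - 1)^m ds = Γ(z) f_m(z), where f_m(z) = Σ_{k=1}^{m} binom(m,k) (-1)^{m-k} k^{-z}. -/

import Mathlib

/-!
For `-1 < Re z < 0` the binomial theorem gives
`(e^{-s} - 1)^m = ∑_{k=1}^m (m choose k) (-1)^(m-k) (e^{-ks} - 1)` (the `k = 0` term vanishes
because `(1 - 1)^m = 0`), and an integration by parts gives
`∫₀^∞ s^(z-1) (e^{-ks} - 1) ds = k^(-z) Γ(z + 1) / z = k^(-z) Γ(z)`.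
To reach the whole strip `-m < Re z < 0`, divide by `Γ`: the Mellin transform of `(e^{-s} - 1)^m`
is holomorphic there (it is `O(1)` at `∞` and `O(s^m)` at `0`) and `1 / Γ` is entire, so both sides
of `mellin (e^{-s} - 1)^m · Γ⁻¹ = f_m` agree on the strip by analytic continuation. Away from the
poles of `Γ` one can multiply back by `Γ(z) ≠ 0`.
-/

open MeasureTheory Set Filter Asymptotics Complex
open scoped Topology

lemma sub_one_pow_eq_sum_Icc {R : Type*} [CommRing R] (x : R) {m : ℕ} (hm : m ≠ 0) :
    (x - 1) ^ m = ∑ k ∈ Finset.Icc 1 m, (m.choose k : R) * (-1) ^ (m - k) * (x ^ k - 1) := by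
  have hx : (x - 1) ^ m = ∑ k ∈ Finset.range (m + 1), x ^ k * (-1 : R) ^ (m - k) * m.choose k := by
    simpa [sub_eq_add_neg] using add_pow x (-1 : R) m
  have h1 : ∑ k ∈ Finset.range (m + 1), (-1 : R) ^ (m - k) * m.choose k = 0 := by
    simpa [zero_pow hm] using (add_pow (1 : R) (-1) m).symm
  calc (x - 1) ^ m
      = ∑ k ∈ Finset.range (m + 1), (m.choose k : R) * (-1) ^ (m - k) * (x ^ k - 1) := by
        rw [hx, ← sub_zero (Finset.sum _ _), ← h1, ← Finset.sum_sub_distrib]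
        exact Finset.sum_congr rfl fun k _ => by ring
    _ = _ := by
        refine (Finset.sum_subset (fun k hk => ?_) fun k hk hk' => ?_).symm
        · simp only [Finset.mem_Icc, Finset.mem_range] at hk ⊢; omega
        · obtain rfl : k = 0 := by simp only [Finset.mem_Icc, Finset.mem_range] at hk hk'; omega
          simp

lemma mellin_finsetSum {ι E : Type*} [NormedAddCommGroup E] [NormedSpace ℂ E] (s : Finset ι)
    {f : ι → ℝ → E} {z : ℂ} (hf : ∀ i ∈ s, MellinConvergent (f i) z) :
    mellin (fun t => ∑ i ∈ s, f i t) z = ∑ i ∈ s, mellin (f i) z := by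
  simp only [mellin, Finset.smul_sum]
  exact integral_finsetSum s hf

lemma norm_exp_neg_ofReal_sub_one_le_one {t : ℝ} (ht : 0 ≤ t) : ‖cexp (-t) - 1‖ ≤ 1 := by
  rw [← ofReal_neg, ← ofReal_exp, ← ofReal_one, ← ofReal_sub, norm_real, Real.norm_eq_abs,
    abs_sub_comm, abs_of_nonneg (by simpa using ht)]
  linarith [Real.exp_pos (-t)]

lemma norm_exp_neg_ofReal_sub_one_le {t : ℝ} (ht : 0 ≤ t) : ‖cexp (-t) - 1‖ ≤ t := by
  rw [← ofReal_neg, ← ofReal_exp, ← ofReal_one, ← ofReal_sub, norm_real, Real.norm_eq_abs,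
    abs_sub_comm, abs_of_nonneg (by simpa using ht)]
  linarith [Real.add_one_le_exp (-t)]

lemma isBigO_exp_neg_sub_one_pow_atTop (m : ℕ) :
    (fun t : ℝ => (cexp (-t) - 1) ^ m) =O[atTop] fun t => t ^ (-(0 : ℝ)) := by
  refine isBigO_iff.2 ⟨1, ?_⟩
  filter_upwards [eventually_ge_atTop 0] with t ht
  simpa [norm_pow] using pow_le_one₀ (norm_nonneg _) (norm_exp_neg_ofReal_sub_one_le_one ht)

lemma isBigO_exp_neg_sub_one_pow_nhdsGT_zero (m : ℕ) :
    (fun t : ℝ => (cexp (-t) - 1) ^ m) =O[𝓝[>] 0] fun t => t ^ (-(-m : ℝ)) := by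
  refine isBigO_iff.2 ⟨1, ?_⟩
  filter_upwards [self_mem_nhdsWithin] with t (ht : 0 < t)
  rw [neg_neg, Real.rpow_natCast, one_mul, norm_pow, norm_pow, Real.norm_of_nonneg ht.le]
  exact pow_le_pow_left₀ (norm_nonneg _) (norm_exp_neg_ofReal_sub_one_le ht.le) m

lemma locallyIntegrableOn_exp_neg_sub_one_pow (m : ℕ) :
    LocallyIntegrableOn (fun t : ℝ => (cexp (-t) - 1) ^ m) (Ioi 0) :=
  (by fun_prop : Continuous fun t : ℝ => (cexp (-t) - 1) ^ m).locallyIntegrable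
    |>.locallyIntegrableOn _

lemma mellinConvergent_exp_neg_sub_one_pow {m : ℕ} {z : ℂ} (hz : -m < z.re) (hz' : z.re < 0) :
    MellinConvergent (fun t : ℝ => (cexp (-t) - 1) ^ m) z :=
  mellinConvergent_of_isBigO_rpow (locallyIntegrableOn_exp_neg_sub_one_pow m)
    (isBigO_exp_neg_sub_one_pow_atTop m) hz' (isBigO_exp_neg_sub_one_pow_nhdsGT_zero m) hz

lemma differentiableAt_mellin_exp_neg_sub_one_pow {m : ℕ} {z : ℂ} (hz : -m < z.re)
    (hz' : z.re < 0) : DifferentiableAt ℂ (mellin fun t : ℝ => (cexp (-t) - 1) ^ m) z :=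
  mellin_differentiableAt_of_isBigO_rpow (locallyIntegrableOn_exp_neg_sub_one_pow m)
    (isBigO_exp_neg_sub_one_pow_atTop m) hz' (isBigO_exp_neg_sub_one_pow_nhdsGT_zero m) hz

lemma tendsto_exp_neg_sub_one_mul_cpow_nhdsGT_zero {z : ℂ} (hz : -1 < z.re) :
    Tendsto (fun t : ℝ => (cexp (-t) - 1) * (t : ℂ) ^ z) (𝓝[>] 0) (𝓝 0) := by
  refine squeeze_zero_norm' (a := fun t => t ^ (z.re + 1)) ?_ ?_
  · filter_upwards [self_mem_nhdsWithin] with t (ht : 0 < t)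
    rw [norm_mul, norm_cpow_eq_rpow_re_of_pos ht, Real.rpow_add_one ht.ne', mul_comm (t ^ z.re)]
    exact mul_le_mul_of_nonneg_right (norm_exp_neg_ofReal_sub_one_le ht.le) (by positivity)
  · simpa [Real.zero_rpow (by linarith : z.re + 1 ≠ 0)] using
      (Real.continuousAt_rpow_const 0 (z.re + 1) (Or.inr (by linarith))).tendsto.mono_left
        nhdsWithin_le_nhds

lemma tendsto_exp_neg_sub_one_mul_cpow_atTop {z : ℂ} (hz : z.re < 0) :
    Tendsto (fun t : ℝ => (cexp (-t) - 1) * (t : ℂ) ^ z) atTop (𝓝 0) := by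
  refine squeeze_zero_norm' (a := fun t => t ^ (-(-z.re))) ?_ (tendsto_rpow_neg_atTop (by linarith))
  filter_upwards [eventually_gt_atTop 0] with t ht
  rw [norm_mul, norm_cpow_eq_rpow_re_of_pos ht, neg_neg]
  exact mul_le_of_le_one_left (by positivity) (norm_exp_neg_ofReal_sub_one_le_one ht.le)

lemma mellin_exp_neg_sub_one {z : ℂ} (hz : -1 < z.re) (hz' : z.re < 0) :
    mellin (fun t : ℝ => cexp (-t) - 1) z = Gamma z := by
  have hz0 : z ≠ 0 := by rintro rfl; simp at hz'
  have hu : ∀ t ∈ Ioi (0 : ℝ), HasDerivAt (fun t : ℝ => cexp (-t) - 1) (-cexp (-t)) t := by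
    intro t _
    simpa using ((hasDerivAt_id (t : ℂ)).neg.cexp.comp_ofReal).sub_const 1
  have hv : ∀ t ∈ Ioi (0 : ℝ), HasDerivAt (fun t : ℝ => (t : ℂ) ^ z / z) ((t : ℂ) ^ (z - 1)) t := by
    intro t ht
    simpa using hasDerivAt_ofReal_cpow_const' (ne_of_gt ht) (r := z - 1) (by
      contrapose! hz0; simpa using hz0)
  have huv' :
      IntegrableOn ((fun t : ℝ => cexp (-t) - 1) * fun t : ℝ => (t : ℂ) ^ (z - 1)) (Ioi 0) := by
    have := mellinConvergent_exp_neg_sub_one_pow (m := 1) (by simpa using hz) hz'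
    simpa [MellinConvergent, Pi.mul_def, mul_comm] using this
  have hu'v : IntegrableOn ((fun t : ℝ => -cexp (-t)) * fun t : ℝ => (t : ℂ) ^ z / z) (Ioi 0) := by
    have hΓ := (GammaIntegral_convergent (s := z + 1) (by simp; linarith)).div_const z
    refine IntegrableOn.congr_fun hΓ.neg (fun t _ => ?_) measurableSet_Ioi
    simp [ofReal_exp, mul_div_assoc]
  have h0 := (tendsto_exp_neg_sub_one_mul_cpow_nhdsGT_zero hz).div_const z
  have htop := (tendsto_exp_neg_sub_one_mul_cpow_atTop hz').div_const z
  simp_rw [zero_div, mul_div_assoc] at h0 htop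
  have key := integral_Ioi_mul_deriv_eq_deriv_mul hu hv huv' hu'v h0 htop
  calc mellin (fun t : ℝ => cexp (-t) - 1) z
      = ∫ t in Ioi (0 : ℝ), (cexp (-t) - 1) * (t : ℂ) ^ (z - 1) := by
        simp only [mellin, smul_eq_mul, mul_comm]
    _ = GammaIntegral (z + 1) / z := by
        rw [key, GammaIntegral, ← integral_div, sub_self, zero_sub, ← integral_neg]
        refine setIntegral_congr_fun measurableSet_Ioi fun t _ => ?_
        simp [ofReal_exp, mul_div_assoc]
    _ = Gamma z := by
        rw [← Gamma_eq_integral (by simp; linarith), Gamma_add_one z hz0,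
          mul_div_cancel_left₀ _ hz0]

lemma exp_neg_sub_one_pow_eq_sum_Icc {m : ℕ} (hm : m ≠ 0) (t : ℝ) :
    (cexp (-t) - 1) ^ m
      = ∑ k ∈ Finset.Icc 1 m, (m.choose k : ℂ) * (-1) ^ (m - k) * (cexp (-↑(k * t)) - 1) := by
  rw [sub_one_pow_eq_sum_Icc _ hm]
  refine Finset.sum_congr rfl fun k _ => ?_
  rw [← exp_nat_mul]
  push_cast
  ring_nf

lemma mellin_exp_neg_sub_one_pow_of_neg_one_lt {m : ℕ} (hm : m ≠ 0) {z : ℂ} (hz : -1 < z.re)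
    (hz' : z.re < 0) :
    mellin (fun t : ℝ => (cexp (-t) - 1) ^ m) z
      = Gamma z * ∑ k ∈ Finset.Icc 1 m, (m.choose k : ℂ) * (-1) ^ (m - k) * (k : ℂ) ^ (-z) := by
  have hconv : MellinConvergent (fun t : ℝ => cexp (-t) - 1) z := by
    simpa using mellinConvergent_exp_neg_sub_one_pow (m := 1) (by simpa using hz) hz'
  simp_rw [exp_neg_sub_one_pow_eq_sum_Icc hm]
  rw [mellin_finsetSum _ fun k hk => ?_, Finset.mul_sum]
  · refine Finset.sum_congr rfl fun k hk => ?_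
    have hk : (0 : ℝ) < k := by exact_mod_cast (Finset.mem_Icc.1 hk).1
    have := mellin_const_smul (fun t : ℝ => cexp (-↑(k * t)) - 1) z
      ((m.choose k : ℂ) * (-1) ^ (m - k))
    simp only [smul_eq_mul] at this
    rw [this, mellin_comp_mul_left (fun t : ℝ => cexp (-t) - 1) z hk, mellin_exp_neg_sub_one hz hz']
    push_cast
    ring
  · have hk : (0 : ℝ) < k := by exact_mod_cast (Finset.mem_Icc.1 hk).1
    exact ((MellinConvergent.comp_mul_left hk).2 hconv).const_smul
      ((m.choose k : ℂ) * (-1) ^ (m - k))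

lemma Gamma_ne_zero_of_re_mem_Ioo {z : ℂ} (hz : -1 < z.re) (hz' : z.re < 0) : Gamma z ≠ 0 :=
  Gamma_ne_zero fun n hn => by
    have : z.re = -n := by simp [hn]
    rcases n with _ | n <;> push_cast at this <;> linarith

lemma mellin_exp_neg_sub_one_pow_mul_inv_Gamma {m : ℕ} {z : ℂ} (hz : -m < z.re) (hz' : z.re < 0) :
    mellin (fun t : ℝ => (cexp (-t) - 1) ^ m) z * (Gamma z)⁻¹
      = ∑ k ∈ Finset.Icc 1 m, (m.choose k : ℂ) * (-1) ^ (m - k) * (k : ℂ) ^ (-z) := by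
  have hm : m ≠ 0 := by rintro rfl; simp at hz; linarith
  have hopen : ∀ a b : ℝ, IsOpen (re ⁻¹' Ioo a b) := fun a b => isOpen_Ioo.preimage continuous_re
  suffices EqOn (fun w => mellin (fun t : ℝ => (cexp (-t) - 1) ^ m) w * (Gamma w)⁻¹)
      (fun w => ∑ k ∈ Finset.Icc 1 m, (m.choose k : ℂ) * (-1) ^ (m - k) * (k : ℂ) ^ (-w))
      (re ⁻¹' Ioo (-m) 0) from this ⟨hz, hz'⟩
  refine AnalyticOnNhd.eqOn_of_preconnected_of_eventuallyEq (𝕜 := ℂ) (z₀ := -1 / 2) ?_ ?_ ?_ ?_ ?_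
  · refine DifferentiableOn.analyticOnNhd (fun w hw => ?_) (hopen _ _)
    exact ((differentiableAt_mellin_exp_neg_sub_one_pow hw.1 hw.2).mul
      (differentiable_one_div_Gamma w)).differentiableWithinAt
  · refine DifferentiableOn.analyticOnNhd (fun w _ => ?_) (hopen _ _)
    refine (DifferentiableAt.fun_sum fun k hk => ?_).differentiableWithinAt
    have hk : (k : ℂ) ≠ 0 := Nat.cast_ne_zero.2 (by have := (Finset.mem_Icc.1 hk).1; omega)
    exact (differentiableAt_id.neg.const_cpow (Or.inl hk)).const_mul _
  · exact ((convex_Ioo _ _).linear_preimage reLm).isPreconnected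
  · have hm' : (1 : ℝ) ≤ m := by exact_mod_cast Nat.one_le_iff_ne_zero.2 hm
    exact ⟨by norm_num; linarith, by norm_num⟩
  · filter_upwards [(hopen (-1) 0).mem_nhds (by constructor <;> norm_num)] with w hw
    rw [mellin_exp_neg_sub_one_pow_of_neg_one_lt hm hw.1 hw.2,
      mul_comm, inv_mul_cancel_left₀ (Gamma_ne_zero_of_re_mem_Ioo hw.1 hw.2)]

theorem stmt_1 (m : ℕ) (z : ℂ) (hzre : -(m : ℝ) < z.re) (hzre' : z.re < 0)
    (hz : ∀ n : ℤ, n < 0 → z ≠ (n : ℂ)) :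
    ∫ s in Ioi (0 : ℝ), (s : ℂ) ^ (z - 1) * (Complex.exp (-(s : ℂ)) - 1) ^ m
      = Complex.Gamma z *
          ∑ k ∈ Finset.Icc 1 m, (m.choose k : ℂ) * (-1) ^ (m - k) * (k : ℂ) ^ (-z) := by
  have hΓ : Gamma z ≠ 0 := Gamma_ne_zero fun n hn => by
    rcases n with _ | n
    · simp [hn] at hzre'
    · exact hz (-(n + 1 : ℕ)) (by omega) (by simpa using hn)
  have key := mellin_exp_neg_sub_one_pow_mul_inv_Gamma hzre hzre'
  rw [mul_comm, ← (mul_inv_eq_iff_eq_mul₀ hΓ).1 key]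
  rfl
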